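/- Intervention sub-optimality with TV loss: Let π be a policy such that E_{s∼β}[D_TV(π(·|s), π*(·|s))] ≤ ε_b, where β is the distribution over intervened states. Then J(π*) − J(π) ≤ pH + δ ε_b H², where δ = E_{s∼d^{π'}}[I(Q_h^{π*}(s,π*) − Q_h^{π*}(s,π) > p)]. -/

import Mathlib

/-!
By the performance-difference lemma, `J(π') - J(ν)` is the sum over steps `h` of the advantage
of `π'` over `ν`, averaged over the state distribution of `π'` at step `h`. For `ν = π*` this
advantage is at least `-p` at every state, because `π'` departs from `π*` only where the Q-gap is
at most `p`. For `ν = π` it vanishes where `π'` agrees with `π`, and elsewhere it is at most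
`H · D_TV(π, π*)`; the states where `π'` intervenes carry total mass `H δ β`. Subtracting the two
estimates gives the bound.
-/

open Finset

noncomputable section

attribute [local instance] Classical.propDecidable

variable {S A : Type*}

/-- `p` is a probability distribution on a finite type. -/
def IsDist {X : Type*} [Fintype X] (p : X → ℝ) : Prop :=
  (∀ x, 0 ≤ p x) ∧ ∑ x, p x = 1

/-- A (stochastic) policy: a distribution over actions at each state. -/
def IsPolicy [Fintype A] (π : S → A → ℝ) : Prop := ∀ s, IsDist (π s)

/-- A transition kernel. -/
def IsKernel [Fintype S] (P : S → A → S → ℝ) : Prop := ∀ s a, IsDist (P s a)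

/-- Total variation distance on a finite type. -/
def tvDist {X : Type*} [Fintype X] (p q : X → ℝ) : ℝ := (1/2) * ∑ x, |p x - q x|

variable [Fintype S] [Fintype A]

/-- Q-value for a (possibly nonstationary) policy `πt` (indexed by time step):
`Qn P r πt k t s a` is the expected reward-to-go with `k` steps remaining, at current time
step `t`, taking action `a` in state `s` and thereafter following `πt`. -/
def Qn (P : S → A → S → ℝ) (r : S → A → ℝ) (πt : ℕ → S → A → ℝ) :
    ℕ → ℕ → S → A → ℝ
  | 0, _ => fun _ _ => 0
  | k+1, t => fun s a =>
      r s a + ∑ s', P s a s' * ∑ a', πt (t+1) s' a' * Qn P r πt k (t+1) s' a'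

/-- Expected Q-value when the first action is drawn from `π''`. -/
def QEn (P : S → A → S → ℝ) (r : S → A → ℝ) (πt : ℕ → S → A → ℝ)
    (k t : ℕ) (s : S) (π'' : S → A → ℝ) : ℝ :=
  ∑ a, π'' s a * Qn P r πt k t s a

/-- State distribution at (0-indexed) step `h` when following `πt` from initial
distribution `ρ`. -/
def stateDistN (P : S → A → S → ℝ) (ρ : S → ℝ) (πt : ℕ → S → A → ℝ) : ℕ → S → ℝ
  | 0 => ρ
  | h+1 => fun s' => ∑ s, ∑ a, stateDistN P ρ πt h s * πt h s a * P s a s'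

/-- Policy value: expected cumulative reward over horizon `H`. -/
def Jn (P : S → A → S → ℝ) (r : S → A → ℝ) (ρ : S → ℝ) (H : ℕ)
    (πt : ℕ → S → A → ℝ) : ℝ :=
  ∑ s, ρ s * QEn P r πt H 0 s (πt 0)

/-- Stationary-policy Q-value with `k` steps remaining. -/
def Qst (P : S → A → S → ℝ) (r : S → A → ℝ) (π : S → A → ℝ) (k : ℕ) :
    S → A → ℝ := Qn P r (fun _ => π) k 0

/-- Stationary expected Q-value, first action drawn from `π''`. -/
def QE (P : S → A → S → ℝ) (r : S → A → ℝ) (π : S → A → ℝ) (k : ℕ) (s : S)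
    (π'' : S → A → ℝ) : ℝ := ∑ a, π'' s a * Qst P r π k s a

/-- State distribution at (0-indexed) step `h` under a stationary policy. -/
def stateDist (P : S → A → S → ℝ) (ρ : S → ℝ) (π : S → A → ℝ) : ℕ → S → ℝ :=
  stateDistN P ρ (fun _ => π)

/-- Policy value of a stationary policy. -/
def J (P : S → A → S → ℝ) (r : S → A → ℝ) (ρ : S → ℝ) (H : ℕ)
    (π : S → A → ℝ) : ℝ := Jn P r ρ H (fun _ => π)

namespace IsDist

variable {X : Type*} [Fintype X] {w : X → ℝ}

lemma sum_mul_le (hw : IsDist w) {f : X → ℝ} {M : ℝ} (hf : ∀ x, f x ≤ M) :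
    ∑ x, w x * f x ≤ M :=
  calc ∑ x, w x * f x ≤ ∑ x, w x * M := by gcongr with x; exacts [hw.1 x, hf x]
    _ = M := by rw [← sum_mul, hw.2, one_mul]

lemma le_sum_mul (hw : IsDist w) {f : X → ℝ} {m : ℝ} (hf : ∀ x, m ≤ f x) :
    m ≤ ∑ x, w x * f x :=
  calc m = ∑ x, w x * m := by rw [← sum_mul, hw.2, one_mul]
    _ ≤ ∑ x, w x * f x := by gcongr with x; exacts [hw.1 x, hf x]

end IsDist

lemma tvDist_nonneg {X : Type*} [Fintype X] (p q : X → ℝ) : 0 ≤ tvDist p q := by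
  unfold tvDist
  positivity

lemma tvDist_comm {X : Type*} [Fintype X] (p q : X → ℝ) : tvDist p q = tvDist q p := by
  simp only [tvDist, abs_sub_comm]

/-- Centring `f` at `M / 2` costs nothing because `p` and `q` have the same mass, and then
`|f - M / 2| ≤ M / 2`. -/
lemma sum_sub_mul_le_mul_tvDist {X : Type*} [Fintype X] {p q f : X → ℝ}
    (hpq : ∑ x, p x = ∑ x, q x) {M : ℝ} (hf : ∀ x, f x ∈ Set.Icc 0 M) :
    ∑ x, (p x - q x) * f x ≤ M * tvDist p q := by
  have hcentre : ∑ x, (p x - q x) * f x = ∑ x, (p x - q x) * (f x - M / 2) := by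
    simp only [mul_sub, sum_sub_distrib, ← sum_mul, hpq, sub_self, zero_mul, sub_zero]
  have hbound : ∀ x, (p x - q x) * (f x - M / 2) ≤ |p x - q x| * (M / 2) := fun x =>
    calc (p x - q x) * (f x - M / 2) ≤ |p x - q x| * |f x - M / 2| :=
          (le_abs_self _).trans (abs_mul _ _).le
      _ ≤ |p x - q x| * (M / 2) := by
          gcongr
          rw [abs_le]
          constructor <;> linarith [(hf x).1, (hf x).2]
  calc ∑ x, (p x - q x) * f x ≤ ∑ x, |p x - q x| * (M / 2) := by
        rw [hcentre]; exact sum_le_sum fun x _ => hbound x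
    _ = M * tvDist p q := by rw [← sum_mul, tvDist]; ring

section ValueFunctions

variable (P : S → A → S → ℝ) (r : S → A → ℝ)

lemma Qn_mem_Icc (hP : IsKernel P) (hr : ∀ s a, 0 ≤ r s a ∧ r s a ≤ 1)
    (μ : ℕ → S → A → ℝ) (hμ : ∀ t, IsPolicy (μ t)) (k t : ℕ) (s : S) (a : A) :
    Qn P r μ k t s a ∈ Set.Icc 0 (k : ℝ) := by
  induction k generalizing t s a with
  | zero => simp [Qn]
  | succ k ih =>
    have hV : ∀ s', QEn P r μ k (t+1) s' (μ (t+1)) ∈ Set.Icc 0 (k : ℝ) := fun s' =>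
      ⟨(hμ (t+1) s').le_sum_mul fun a' => (ih (t+1) s' a').1,
        (hμ (t+1) s').sum_mul_le fun a' => (ih (t+1) s' a').2⟩
    have h0 := (hP s a).le_sum_mul fun s' => (hV s').1
    have h1 := (hP s a).sum_mul_le fun s' => (hV s').2
    simp only [Qn, QEn] at h0 h1 ⊢
    push_cast
    constructor <;> linarith [hr s a]

lemma Qn_const (ν : S → A → ℝ) (k t : ℕ) : Qn P r (fun _ => ν) k t = Qst P r ν k := by
  induction k generalizing t with
  | zero => rfl
  | succ k ih =>
    show _ = Qn P r _ (k+1) 0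
    funext s a
    simp only [Qn, ih]

lemma Qst_succ (ν : S → A → ℝ) (k : ℕ) (s : S) (a : A) :
    Qst P r ν (k+1) s a = r s a + ∑ s', P s a s' * QE P r ν k s' ν := by
  show r s a + ∑ s', P s a s' * ∑ a', ν s' a' * Qn P r (fun _ => ν) k (0+1) s' a' = _
  rw [Qn_const]
  rfl

lemma isDist_stateDistN (ρ : S → ℝ) (hP : IsKernel P) (hρ : IsDist ρ)
    (μ : ℕ → S → A → ℝ) (hμ : ∀ t, IsPolicy (μ t)) (h : ℕ) :
    IsDist (stateDistN P ρ μ h) := by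
  induction h with
  | zero => exact hρ
  | succ h ih =>
    refine ⟨fun s' => ?_, ?_⟩
    · exact sum_nonneg fun s _ => sum_nonneg fun a _ =>
        mul_nonneg (mul_nonneg (ih.1 s) ((hμ h s).1 a)) ((hP s a).1 s')
    · calc ∑ s', ∑ s, ∑ a, stateDistN P ρ μ h s * μ h s a * P s a s'
          = ∑ s, ∑ a, stateDistN P ρ μ h s * μ h s a * ∑ s', P s a s' := by
            simp only [mul_sum]
            rw [sum_comm]
            exact sum_congr rfl fun s _ => sum_comm
        _ = ∑ s, stateDistN P ρ μ h s * ∑ a, μ h s a := by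
            simp only [(hP _ _).2, mul_one, mul_sum]
        _ = 1 := by simp only [(hμ h _).2, mul_one, ih.2]

lemma sum_stateDistN_succ_mul (ρ : S → ℝ) (μ : ℕ → S → A → ℝ) (h : ℕ) (g : S → ℝ) :
    ∑ s', stateDistN P ρ μ (h+1) s' * g s'
      = ∑ s, stateDistN P ρ μ h s * ∑ a, μ h s a * ∑ s', P s a s' * g s' := by
  simp only [stateDistN, sum_mul, mul_sum]
  rw [sum_comm]
  refine sum_congr rfl fun s _ => ?_
  rw [sum_comm]
  exact sum_congr rfl fun a _ => sum_congr rfl fun s' _ => by ring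

lemma QEn_sub_QE_succ (μ : ℕ → S → A → ℝ) (ν : S → A → ℝ) (k t : ℕ) (s : S) :
    QEn P r μ (k+1) t s (μ t) - QE P r ν (k+1) s (μ t)
      = ∑ a, μ t s a * ∑ s', P s a s' *
          (QEn P r μ k (t+1) s' (μ (t+1)) - QE P r ν k s' ν) := by
  rw [QEn, QE, ← sum_sub_distrib]
  refine sum_congr rfl fun a _ => ?_
  rw [← mul_sub, Qst_succ, Qn, add_sub_add_left_eq_sub, ← sum_sub_distrib]
  simp only [mul_sub]
  rfl

def valueGap (ρ : S → ℝ) (μ : ℕ → S → A → ℝ) (ν : S → A → ℝ) (k t : ℕ) : ℝ :=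
  ∑ s, stateDistN P ρ μ t s * (QEn P r μ k t s (μ t) - QE P r ν k s ν)

lemma valueGap_succ (ρ : S → ℝ) (μ : ℕ → S → A → ℝ) (ν : S → A → ℝ) (k t : ℕ) :
    valueGap P r ρ μ ν (k+1) t
      = ∑ s, stateDistN P ρ μ t s * (QE P r ν (k+1) s (μ t) - QE P r ν (k+1) s ν)
        + valueGap P r ρ μ ν k (t+1) := by
  rw [valueGap, valueGap, sum_stateDistN_succ_mul, ← sum_add_distrib]
  refine sum_congr rfl fun s _ => ?_
  rw [← QEn_sub_QE_succ]
  ring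

/-- Performance-difference lemma. -/
theorem Jn_sub_J (ρ : S → ℝ) (H : ℕ) (μ : ℕ → S → A → ℝ) (ν : S → A → ℝ) :
    Jn P r ρ H μ - J P r ρ H ν
      = ∑ h ∈ range H, ∑ s, stateDistN P ρ μ h s *
          (QE P r ν (H - h) s (μ h) - QE P r ν (H - h) s ν) := by
  have hgap_zero : valueGap P r ρ μ ν H 0 = Jn P r ρ H μ - J P r ρ H ν := by
    simp only [valueGap, stateDistN, mul_sub, sum_sub_distrib]
    rfl
  have hgap_end : valueGap P r ρ μ ν 0 H = 0 := by simp [valueGap, QEn, QE, Qst, Qn]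
  have htelescope := sum_range_sub' (fun h => valueGap P r ρ μ ν (H - h) h) H
  simp only [Nat.sub_zero, Nat.sub_self, hgap_zero, hgap_end, sub_zero] at htelescope
  rw [← htelescope]
  refine sum_congr rfl fun h hh => ?_
  obtain ⟨k, hk⟩ : ∃ k, H - h = k + 1 := ⟨H - h - 1, by simp at hh; omega⟩
  rw [hk, show H - (h + 1) = k by omega, valueGap_succ]
  ring

end ValueFunctions

/-- The normalisation `1 / c` is junk when `c = 0`, but then `m` vanishes. -/
lemma eq_mul_of_eq_one_div_mul_of_sum_le {X : Type*} [Fintype X] {m β : X → ℝ} {c : ℝ}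
    (hm : ∀ x, 0 ≤ m x) (hsum : ∑ x, m x ≤ c) (hβ : ∀ x, β x = 1 / c * m x) (x : X) :
    m x = c * β x := by
  rcases eq_or_ne c 0 with rfl | hc
  · exact le_antisymm ((single_le_sum (fun y _ => hm y) (mem_univ x)).trans hsum) (hm x)
      |>.trans (by simp [hβ])
  · rw [hβ, ← mul_assoc, mul_one_div_cancel hc, one_mul]

section Intervention

variable {P : S → A → S → ℝ} {r : S → A → ℝ}

lemma neg_le_QE_sub_of_intervene {ν π σ : S → A → ℝ} {k : ℕ} {s : S} {p : ℝ} (hp : 0 ≤ p)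
    (hσ : σ s = if p < QE P r ν k s ν - QE P r ν k s π then ν s else π s) :
    -p ≤ QE P r ν k s σ - QE P r ν k s ν := by
  unfold QE at hσ ⊢
  rw [hσ]
  split_ifs <;> linarith

lemma QE_sub_le_indicator_mul_tvDist (hP : IsKernel P) (hr : ∀ s a, 0 ≤ r s a ∧ r s a ≤ 1)
    {ν π σ : S → A → ℝ} (hν : IsPolicy ν) (hπ : IsPolicy π) {k K : ℕ} (hkK : k ≤ K) {s : S}
    (hσ : σ s = ν s ∨ σ s = π s) :
    QE P r π k s σ - QE P r π k s π
      ≤ (if σ s ≠ π s then 1 else 0) * (K * tvDist (π s) (ν s)) := by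
  by_cases hσπ : σ s = π s
  · simp [QE, hσπ]
  have hσν : σ s = ν s := hσ.resolve_right hσπ
  calc QE P r π k s σ - QE P r π k s π = ∑ a, (ν s a - π s a) * Qst P r π k s a := by
        simp only [QE, hσν, sub_mul, sum_sub_distrib]
    _ ≤ k * tvDist (ν s) (π s) :=
        sum_sub_mul_le_mul_tvDist (by rw [(hν s).2, (hπ s).2])
          fun a => Qn_mem_Icc P r hP hr _ (fun _ => hπ) k 0 s a
    _ ≤ K * tvDist (π s) (ν s) := by
        rw [tvDist_comm]
        gcongr
        exact tvDist_nonneg _ _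
    _ = _ := by rw [if_pos hσπ, one_mul]

variable (P) (ρ : S → ℝ) (H : ℕ)

/-- The unnormalised `β`. -/
def interventionMass (π' : ℕ → S → A → ℝ) (π : S → A → ℝ) (s : S) : ℝ :=
  ∑ h ∈ range H, (if π' h s ≠ π s then 1 else 0) * stateDistN P ρ π' h s

variable {P ρ H}

lemma interventionMass_nonneg {π' : ℕ → S → A → ℝ} (hd : ∀ h, IsDist (stateDistN P ρ π' h))
    (π : S → A → ℝ) (s : S) : 0 ≤ interventionMass P ρ H π' π s :=
  sum_nonneg fun h _ => mul_nonneg (by split_ifs <;> norm_num) ((hd h).1 s)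

lemma sum_interventionMass_le {πstar π : S → A → ℝ} {π' : ℕ → S → A → ℝ}
    (hd : ∀ h, IsDist (stateDistN P ρ π' h)) {c : ℕ → S → Prop} [∀ h s, Decidable (c h s)]
    (hπ' : ∀ h s, π' h s = if c h s then πstar s else π s) {δ : ℝ}
    (hδ : δ = 1 / (H : ℝ) * ∑ h ∈ range H, ∑ s,
      stateDistN P ρ π' h s * (if c h s then 1 else 0)) :
    ∑ s, interventionMass P ρ H π' π s ≤ H * δ := by
  have hHδ : H * δ = ∑ h ∈ range H, ∑ s, stateDistN P ρ π' h s * (if c h s then 1 else 0) := by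
    rcases eq_or_ne H 0 with rfl | hH
    · simp
    · rw [hδ, ← mul_assoc, mul_one_div_cancel (Nat.cast_ne_zero.mpr hH), one_mul]
  unfold interventionMass
  rw [hHδ, sum_comm]
  refine sum_le_sum fun h _ => sum_le_sum fun s _ => ?_
  by_cases hc : c h s
  · rw [if_pos hc, mul_one]
    exact mul_le_of_le_one_left ((hd h).1 s) (by split_ifs <;> norm_num)
  · simp [hπ' h s, hc]

variable (r)

lemma neg_mul_le_Jn_sub_J_of_intervene (hP : IsKernel P) (hρ : IsDist ρ)
    {πstar π : S → A → ℝ} {p : ℝ} (hp : 0 ≤ p) {π' : ℕ → S → A → ℝ}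
    (hpol : ∀ h, IsPolicy (π' h))
    (hπ' : ∀ h s, π' h s =
      if p < QE P r πstar (H - h) s πstar - QE P r πstar (H - h) s π then πstar s else π s) :
    -(p * H) ≤ Jn P r ρ H π' - J P r ρ H πstar := by
  rw [Jn_sub_J]
  calc -(p * H) = ∑ _h ∈ range H, -p := by simp [mul_comm]
    _ ≤ _ := sum_le_sum fun h _ => (isDist_stateDistN P ρ hP hρ π' hpol h).le_sum_mul
        fun s => neg_le_QE_sub_of_intervene hp (hπ' h s)

lemma Jn_sub_J_le_of_intervene (hP : IsKernel P) (hr : ∀ s a, 0 ≤ r s a ∧ r s a ≤ 1)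
    {πstar π : S → A → ℝ} (hstar : IsPolicy πstar) (hπ : IsPolicy π) {π' : ℕ → S → A → ℝ}
    (hd : ∀ h, IsDist (stateDistN P ρ π' h)) (hmix : ∀ h s, π' h s = πstar s ∨ π' h s = π s) :
    Jn P r ρ H π' - J P r ρ H π
      ≤ H * ∑ s, interventionMass P ρ H π' π s * tvDist (π s) (πstar s) := by
  rw [Jn_sub_J]
  calc _ ≤ ∑ h ∈ range H, ∑ s, stateDistN P ρ π' h s *
          ((if π' h s ≠ π s then 1 else 0) * (H * tvDist (π s) (πstar s))) :=
        sum_le_sum fun h _ => sum_le_sum fun s _ => mul_le_mul_of_nonneg_left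
          (QE_sub_le_indicator_mul_tvDist hP hr hstar hπ (Nat.sub_le H h) (hmix h s))
          ((hd h).1 s)
    _ = _ := by
        simp only [interventionMass, sum_mul, mul_sum]
        rw [sum_comm]
        exact sum_congr rfl fun s _ => sum_congr rfl fun h _ => by ring

end Intervention

theorem intervention_suboptimality_tv_general
    (P : S → A → S → ℝ) (r : S → A → ℝ) (ρ : S → ℝ) (H : ℕ)
    (hP : IsKernel P) (hρ : IsDist ρ) (hr : ∀ s a, 0 ≤ r s a ∧ r s a ≤ 1)
    (πstar π : S → A → ℝ) (hstar : IsPolicy πstar) (hπ : IsPolicy π)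
    (p εb : ℝ) (hp : 0 ≤ p)
    (π' : ℕ → S → A → ℝ)
    (hπ' : ∀ h s, π' h s =
      if p < QE P r πstar (H - h) s πstar - QE P r πstar (H - h) s π
      then πstar s else π s)
    (δ : ℝ)
    (hδ : δ = (1 / (H : ℝ)) * ∑ h ∈ Finset.range H, ∑ s, stateDistN P ρ π' h s *
      (if p < QE P r πstar (H - h) s πstar - QE P r πstar (H - h) s π then 1 else 0))
    (β : S → ℝ)
    (hβ : ∀ s, β s = (1 / ((H : ℝ) * δ)) * ∑ h ∈ Finset.range H,
      (if π' h s ≠ π s then 1 else 0) * stateDistN P ρ π' h s)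
    (hloss : ∑ s, β s * tvDist (π s) (πstar s) ≤ εb) :
    J P r ρ H πstar - J P r ρ H π ≤ p * H + δ * εb * (H : ℝ)^2 := by
  have hmix : ∀ h s, π' h s = πstar s ∨ π' h s = π s := fun h s => by
    rw [hπ' h s]
    split_ifs <;> simp
  have hpol : ∀ h, IsPolicy (π' h) := fun h s =>
    (hmix h s).elim (fun e => e ▸ hstar s) (fun e => e ▸ hπ s)
  have hd := isDist_stateDistN P ρ hP hρ π' hpol
  have hsum := sum_interventionMass_le hd hπ' hδ
  have hmass := eq_mul_of_eq_one_div_mul_of_sum_le (interventionMass_nonneg hd π) hsum hβ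
  have hHδ_nonneg : 0 ≤ (H : ℝ) * δ :=
    (sum_nonneg fun s _ => interventionMass_nonneg hd π s).trans hsum
  have hgain := Jn_sub_J_le_of_intervene r (H := H) hP hr hstar hπ hd hmix
  have hloss_opt := neg_mul_le_Jn_sub_J_of_intervene r hP hρ hp hpol hπ'
  calc J P r ρ H πstar - J P r ρ H π
      = (Jn P r ρ H π' - J P r ρ H π) - (Jn P r ρ H π' - J P r ρ H πstar) := by ring
    _ ≤ H * ∑ s, interventionMass P ρ H π' π s * tvDist (π s) (πstar s) + p * H := by
        linarith
    _ = H * (H * δ) * ∑ s, β s * tvDist (π s) (πstar s) + p * H := by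
        simp only [hmass, mul_assoc, ← mul_sum]
    _ ≤ H * (H * δ) * εb + p * H := by gcongr
    _ = p * H + δ * εb * (H : ℝ)^2 := by ring

/-- Intervention sub-optimality bound with TV-distance loss:
if `E_{s∼β}[D_TV(π(·|s),π*(·|s))] ≤ ε_b` then `J(π*) − J(π) ≤ pH + δ ε_b H²`. -/
theorem intervention_suboptimality_tv
    (P : S → A → S → ℝ) (r : S → A → ℝ) (ρ : S → ℝ) (H : ℕ)
    (hP : IsKernel P) (hρ : IsDist ρ) (hr : ∀ s a, 0 ≤ r s a ∧ r s a ≤ 1)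
    (πstar π : S → A → ℝ) (hstar : IsPolicy πstar) (hπ : IsPolicy π)
    (p εb : ℝ) (hp : 0 ≤ p) (hεb : 0 ≤ εb)
    (π' : ℕ → S → A → ℝ)
    (hπ' : ∀ h s, π' h s =
      if p < QE P r πstar (H - h) s πstar - QE P r πstar (H - h) s π
      then πstar s else π s)
    (δ : ℝ)
    (hδ : δ = (1 / (H : ℝ)) * ∑ h ∈ Finset.range H, ∑ s, stateDistN P ρ π' h s *
      (if p < QE P r πstar (H - h) s πstar - QE P r πstar (H - h) s π then 1 else 0))
    (β : S → ℝ)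
    (hβ : ∀ s, β s = (1 / ((H : ℝ) * δ)) * ∑ h ∈ Finset.range H,
      (if π' h s ≠ π s then 1 else 0) * stateDistN P ρ π' h s)
    (hloss : ∑ s, β s * tvDist (π s) (πstar s) ≤ εb) :
    J P r ρ H πstar - J P r ρ H π ≤ p * H + δ * εb * (H : ℝ)^2 :=
  intervention_suboptimality_tv_general P r ρ H hP hρ hr πstar π hstar hπ p εb hp π' hπ' δ hδ β hβ
    hloss
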